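/- arXiv:1601.02501 — 3 statements merged into one kernel-verified Lean document; each statement's English description precedes it below -/
import Mathlib

section
/- Let ρ be the 2×2 diagonal matrix diag(1/|q_0|^2, 1/|q_1|^2) with q_0, q_1 nonzero complex numbers and |q_0| ≠ |q_1|. Then there do not exist three 2×2 unitary matrices U_1, U_2, U_3 such that Tr(U_n ρ U_m†) = 0 for all n ≠ m in {1,2,3}. -/
/-!
For distinct `n, m` the matrix `W = (U m)ᴴ * U n` is unitary and the trace condition reads
`a * W 0 0 + b * W 1 1 = 0` with `‖a‖ ≠ ‖b‖`. A unitary `2 × 2` matrix has `‖W 0 0‖ = ‖W 1 1‖`,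
so both diagonal entries of `W` vanish. Now `(U 2)ᴴ U 0 = ((U 2)ᴴ U 1) ((U 1)ᴴ U 0)` is a product
of two matrices with zero diagonal, hence has zero off-diagonal; having zero diagonal itself,
it is `0`, which is not unitary.
-/

open Matrix

namespace Matrix

theorem trace_mul_diagonal_mul {n : Type*} [Fintype n] [DecidableEq n] {R : Type*}
    [CommSemiring R] (A B : Matrix n n R) (d : n → R) :
    (A * diagonal d * B).trace = ∑ i, d i * (B * A) i i := by
  rw [trace_mul_cycle]
  simp only [trace, diag_apply, mul_diagonal, mul_comm]

theorem norm_apply_zero_zero_eq_of_mem_unitaryGroup {W : Matrix (Fin 2) (Fin 2) ℂ}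
    (hW : W ∈ unitaryGroup (Fin 2) ℂ) : ‖W 0 0‖ = ‖W 1 1‖ := by
  have row := congrFun₂ (mem_unitaryGroup_iff.mp hW) 0 0
  have col := congrFun₂ (mem_unitaryGroup_iff'.mp hW) 1 1
  simp only [mul_apply, Fin.sum_univ_two, star_eq_conjTranspose, conjTranspose_apply,
    RCLike.star_def, Complex.mul_conj', Complex.conj_mul', one_apply_eq] at row col
  norm_cast at row col
  exact (pow_left_inj₀ (norm_nonneg _) (norm_nonneg _) two_ne_zero).mp (by linarith)

theorem diag_eq_zero_of_mem_unitaryGroup_of_add_eq_zero {W : Matrix (Fin 2) (Fin 2) ℂ}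
    (hW : W ∈ unitaryGroup (Fin 2) ℂ) {a b : ℂ} (hab : ‖a‖ ≠ ‖b‖)
    (h : a * W 0 0 + b * W 1 1 = 0) : ∀ i, W i i = 0 := by
  have hnorm := norm_apply_zero_zero_eq_of_mem_unitaryGroup hW
  have h00 : W 0 0 = 0 := by
    have : ‖a‖ * ‖W 0 0‖ = ‖b‖ * ‖W 0 0‖ := by
      rw [← norm_mul, hnorm, ← norm_mul, eq_neg_of_add_eq_zero_left h, norm_neg]
    simpa [hab] using this
  intro i
  fin_cases i
  · exact h00
  · rw [h00, norm_zero, eq_comm, norm_eq_zero] at hnorm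
    exact hnorm

theorem mul_eq_zero_of_diag_eq_zero {R : Type*} [NonUnitalNonAssocSemiring R]
    {A B : Matrix (Fin 2) (Fin 2) R} (hA : ∀ i, A i i = 0) (hB : ∀ i, B i i = 0)
    (hAB : ∀ i, (A * B) i i = 0) : A * B = 0 := by
  ext i j
  fin_cases i <;> fin_cases j
  · exact hAB 0
  · simp [mul_apply, Fin.sum_univ_two, hA, hB]
  · simp [mul_apply, Fin.sum_univ_two, hA, hB]
  · exact hAB 1

theorem diag_conjTranspose_mul_eq_zero_of_trace_eq_zero {U V : Matrix (Fin 2) (Fin 2) ℂ}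
    (hU : U ∈ unitaryGroup (Fin 2) ℂ) (hV : V ∈ unitaryGroup (Fin 2) ℂ) {a b : ℂ}
    (hab : ‖a‖ ≠ ‖b‖) (h : (U * diagonal ![a, b] * Vᴴ).trace = 0) : ∀ i, (Vᴴ * U) i i = 0 :=
  diag_eq_zero_of_mem_unitaryGroup_of_add_eq_zero (mul_mem (Unitary.star_mem hV) hU) hab
    (by simpa [trace_mul_diagonal_mul, Fin.sum_univ_two] using h)

end Matrix

theorem stmt_7_general (q0 q1 : ℂ)
    (hne : ‖q0‖ ≠ ‖q1‖)
    (ρ : Matrix (Fin 2) (Fin 2) ℂ)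
    (hρ : ρ = Matrix.diagonal ![((‖q0‖ ^ 2 : ℝ) : ℂ)⁻¹,
                                ((‖q1‖ ^ 2 : ℝ) : ℂ)⁻¹]) :
    ¬ ∃ U : Fin 3 → Matrix (Fin 2) (Fin 2) ℂ,
        (∀ i, U i ∈ Matrix.unitaryGroup (Fin 2) ℂ) ∧
        (∀ n m, n ≠ m → (U n * ρ * (U m)ᴴ).trace = 0) := by
  rintro ⟨U, hU, htr⟩
  have hab : ‖((‖q0‖ ^ 2 : ℝ) : ℂ)⁻¹‖ ≠ ‖((‖q1‖ ^ 2 : ℝ) : ℂ)⁻¹‖ := by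
    simpa [pow_left_inj₀ (norm_nonneg q0) (norm_nonneg q1) two_ne_zero] using hne
  have hdiag (n m : Fin 3) (hnm : n ≠ m) : ∀ i, ((U m)ᴴ * U n) i i = 0 :=
    diag_conjTranspose_mul_eq_zero_of_trace_eq_zero (hU n) (hU m) hab (hρ ▸ htr n m hnm)
  have hsplit : (U 2)ᴴ * U 0 = ((U 2)ᴴ * U 1) * ((U 1)ᴴ * U 0) := by
    rw [mul_assoc, ← mul_assoc (U 1), ← star_eq_conjTranspose (U 1),
      Unitary.mul_star_self_of_mem (hU 1), one_mul]
  have hzero : (U 2)ᴴ * U 0 = 0 := by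
    rw [hsplit]
    exact mul_eq_zero_of_diag_eq_zero (hdiag 1 2 (by decide)) (hdiag 0 1 (by decide))
      (hsplit ▸ hdiag 0 2 (by decide))
  have hunit := mul_mem (Unitary.star_mem (hU 2)) (hU 0)
  rw [star_eq_conjTranspose, hzero] at hunit
  simpa using Unitary.star_mul_self_of_mem hunit

theorem stmt_7 (q0 q1 : ℂ) (h0 : q0 ≠ 0) (h1 : q1 ≠ 0)
    (hne : ‖q0‖ ≠ ‖q1‖)
    (ρ : Matrix (Fin 2) (Fin 2) ℂ)
    (hρ : ρ = Matrix.diagonal ![((‖q0‖ ^ 2 : ℝ) : ℂ)⁻¹,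
                                ((‖q1‖ ^ 2 : ℝ) : ℂ)⁻¹]) :
    ¬ ∃ U : Fin 3 → Matrix (Fin 2) (Fin 2) ℂ,
        (∀ i, U i ∈ Matrix.unitaryGroup (Fin 2) ℂ) ∧
        (∀ n m, n ≠ m → (U n * ρ * (U m)ᴴ).trace = 0) :=
  stmt_7_general q0 q1 hne ρ hρ
end

section
/- Let g > 0, g ≠ 1, and let α, β, t be real numbers. If t(g e^{iβ} + e^{-iβ}) + (g e^{iα} + e^{-iα}) = 0, then either (t = 1 and α - β ≡ π mod 2π) or (t = -1 and α ≡ β mod 2π). -/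
theorem stmt_9 (g : ℝ) (hg : 0 < g) (hg1 : g ≠ 1) (α β t : ℝ)
    (h : (t : ℂ) * ((g : ℂ) * Complex.exp (β * Complex.I) + Complex.exp (-(β * Complex.I)))
        + ((g : ℂ) * Complex.exp (α * Complex.I) + Complex.exp (-(α * Complex.I))) = 0) :
    (t = 1 ∧ ∃ k : ℤ, α - β = Real.pi + 2 * Real.pi * k) ∨
    (t = -1 ∧ ∃ k : ℤ, α - β = 2 * Real.pi * k) := by
  have hb : -((β:ℂ) * Complex.I) = ((-β : ℝ) : ℂ) * Complex.I := by push_cast; ring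
  have ha : -((α:ℂ) * Complex.I) = ((-α : ℝ) : ℂ) * Complex.I := by push_cast; ring
  rw [hb, ha] at h
  have hR := congrArg Complex.re h
  have hI := congrArg Complex.im h
  simp only [Complex.add_re, Complex.add_im, Complex.mul_re, Complex.mul_im,
    Complex.ofReal_re, Complex.ofReal_im, Complex.exp_ofReal_mul_I_re,
    Complex.exp_ofReal_mul_I_im, Real.cos_neg, Real.sin_neg, Complex.zero_re,
    Complex.zero_im, zero_mul, mul_zero, sub_zero, add_zero, zero_add] at hR hI
  have hca : Real.cos α = -(t * Real.cos β) := by nlinarith [hR]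
  have hsa : Real.sin α = -(t * Real.sin β) := by
    have hg1' : g - 1 ≠ 0 := sub_ne_zero.mpr hg1
    have h2 : (g - 1) * (t * Real.sin β + Real.sin α) = 0 := by nlinarith [hI]
    have := (mul_eq_zero.mp h2).resolve_left hg1'
    linarith
  have ht2 : t ^ 2 = 1 := by
    have h3 : Real.sin α ^ 2 + Real.cos α ^ 2 = t ^ 2 * (Real.sin β ^ 2 + Real.cos β ^ 2) := by
      rw [hca, hsa]; ring
    rw [Real.sin_sq_add_cos_sq, Real.sin_sq_add_cos_sq, mul_one] at h3
    linarith
  have ht : t = 1 ∨ t = -1 := by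
    have h4 : (t - 1) * (t + 1) = 0 := by nlinarith
    rcases mul_eq_zero.mp h4 with h5 | h5
    · left; linarith
    · right; linarith
  rcases ht with rfl | rfl
  · left
    refine ⟨rfl, ?_⟩
    have key : Complex.exp ((α : ℂ) * Complex.I) = Complex.exp (((β + Real.pi : ℝ) : ℂ) * Complex.I) := by
      apply Complex.ext
      · rw [Complex.exp_ofReal_mul_I_re, Complex.exp_ofReal_mul_I_re, Real.cos_add_pi]
        simpa using hca
      · rw [Complex.exp_ofReal_mul_I_im, Complex.exp_ofReal_mul_I_im, Real.sin_add_pi]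
        simpa using hsa
    obtain ⟨n, hn⟩ := Complex.exp_eq_exp_iff_exists_int.mp key
    have hn' := congrArg Complex.im hn
    simp [Complex.add_im, Complex.mul_im] at hn'
    exact ⟨n, by linarith⟩
  · right
    refine ⟨rfl, ?_⟩
    have key : Complex.exp ((α : ℂ) * Complex.I) = Complex.exp ((β : ℂ) * Complex.I) := by
      apply Complex.ext
      · rw [Complex.exp_ofReal_mul_I_re, Complex.exp_ofReal_mul_I_re]
        simpa using hca
      · rw [Complex.exp_ofReal_mul_I_im, Complex.exp_ofReal_mul_I_im]
        simpa using hsa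
    obtain ⟨n, hn⟩ := Complex.exp_eq_exp_iff_exists_int.mp key
    have hn' := congrArg Complex.im hn
    simp [Complex.add_im, Complex.mul_im] at hn'
    exact ⟨n, by linarith⟩
end

section
/- Let θ ∈ (0, π/2) and Q = diag(cos θ, sin θ). With D_1 = [[sin θ, 0],[0, cos θ]] and D_2 = [[0, -sin θ],[cos θ, 0]], the conditions D_1 = p^{1/2}(Q^{-1})† U_1^T and D_2 = p^{1/2}(Q^{-1})† U_2^T hold with p = cos²θ sin²θ, U_1 = I, and U_2 = [[0,1],[-1,0]]. But for D_3 = [[cos θ, 0],[0, -sin θ]], there is no unitary U and p' > 0 with D_3 = p'^{1/2}(Q^{-1})† U^T unless cos θ = sin θ. -/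
/-!
Because `Q` is invertible, `D = √p • ((Q⁻¹)ᴴ * Uᵀ)` is equivalent to `Qᴴ * D = √p • Uᵀ`. For `D₁`
and `D₂` the product `Qᴴ * D` is `cos θ sin θ` times `1` and times the transposed rotation. For `D₃`
it is `diag(cos² θ, -sin² θ)`, and a diagonal matrix that is a scalar multiple of a unitary one has
all its entries of the same modulus, which forces `cos² θ = sin² θ`.
-/

open Matrix

namespace Matrix

theorem eq_smul_conjTranspose_inv_mul_iff {n 𝕜 : Type*} [Fintype n] [DecidableEq n] [Field 𝕜]
    [StarRing 𝕜] {A : Matrix n n 𝕜} (hA : IsUnit A.det) (D B : Matrix n n 𝕜) (r : 𝕜) :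
    D = r • (A⁻¹ᴴ * B) ↔ Aᴴ * D = r • B := by
  have hAH : IsUnit Aᴴ.det := by simpa [det_conjTranspose] using hA.star
  rw [conjTranspose_nonsing_inv, ← Matrix.mul_smul]
  constructor
  · rintro rfl
    exact mul_nonsing_inv_cancel_left _ _ hAH
  · intro h
    rw [← h, nonsing_inv_mul_cancel_left _ _ hAH]

theorem norm_eq_of_diagonal_eq_smul_of_mem_unitaryGroup {n 𝕜 : Type*} [Fintype n] [DecidableEq n]
    [RCLike 𝕜] {d : n → 𝕜} {a : 𝕜} {V : Matrix n n 𝕜} (hV : V ∈ unitaryGroup n 𝕜)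
    (h : diagonal d = a • V) (i : n) : ‖d i‖ = ‖a‖ := by
  have hmul : diagonal d * star (diagonal d) = (a * star a) • (1 : Matrix n n 𝕜) := by
    rw [h, star_smul, smul_mul_smul_comm, mem_unitaryGroup_iff.1 hV]
  have hii := congr_fun₂ hmul i i
  simp only [star_eq_conjTranspose, diagonal_conjTranspose, mul_diagonal, diagonal_apply_eq,
    Pi.star_apply, RCLike.star_def, RCLike.mul_conj, smul_apply, one_apply_eq, smul_eq_mul,
    mul_one] at hii
  exact (sq_eq_sq₀ (norm_nonneg _) (norm_nonneg _)).1 (by exact_mod_cast hii)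

end Matrix

theorem stmt_17 (θ : ℝ) (hθ : θ ∈ Set.Ioo 0 (Real.pi / 2))
    (Q : Matrix (Fin 2) (Fin 2) ℂ)
    (hQ : Q = Matrix.diagonal ![(Real.cos θ : ℂ), (Real.sin θ : ℂ)])
    (D1 D2 D3 : Matrix (Fin 2) (Fin 2) ℂ)
    (hD1 : D1 = !![(Real.sin θ : ℂ), 0; 0, (Real.cos θ : ℂ)])
    (hD2 : D2 = !![0, -(Real.sin θ : ℂ); (Real.cos θ : ℂ), 0])
    (hD3 : D3 = !![(Real.cos θ : ℂ), 0; 0, -(Real.sin θ : ℂ)]) :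
    D1 = (Real.sqrt (Real.cos θ ^ 2 * Real.sin θ ^ 2) : ℂ) •
        ((Q⁻¹)ᴴ * (1 : Matrix (Fin 2) (Fin 2) ℂ)ᵀ) ∧
    D2 = (Real.sqrt (Real.cos θ ^ 2 * Real.sin θ ^ 2) : ℂ) •
        ((Q⁻¹)ᴴ * (!![0, 1; -1, 0] : Matrix (Fin 2) (Fin 2) ℂ)ᵀ) ∧
    (Real.cos θ ≠ Real.sin θ →
      ¬ ∃ (U : Matrix (Fin 2) (Fin 2) ℂ) (p' : ℝ),
          U ∈ Matrix.unitaryGroup (Fin 2) ℂ ∧ 0 < p' ∧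
          D3 = (Real.sqrt p' : ℂ) • ((Q⁻¹)ᴴ * Uᵀ)) := by
  have hc : 0 < Real.cos θ := Real.cos_pos_of_mem_Ioo ⟨by linarith [hθ.1, Real.pi_pos], hθ.2⟩
  have hs : 0 < Real.sin θ := Real.sin_pos_of_pos_of_lt_pi hθ.1 (by linarith [hθ.2, Real.pi_pos])
  generalize Real.cos θ = c at *
  generalize Real.sin θ = s at *
  have hQH : Qᴴ = !![(c : ℂ), 0; 0, (s : ℂ)] := by
    rw [hQ, diagonal_conjTranspose, ← diagonal_vec2]
    simp
  have hQdet : IsUnit Q.det := by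
    simp [hQ, hc.ne', hs.ne']
  have hsqrt : Real.sqrt (c ^ 2 * s ^ 2) = c * s := by
    rw [← mul_pow, Real.sqrt_sq (by positivity)]
  refine ⟨(eq_smul_conjTranspose_inv_mul_iff hQdet _ _ _).2 ?_,
    (eq_smul_conjTranspose_inv_mul_iff hQdet _ _ _).2 ?_, ?_⟩
  · rw [hQH, hD1, hsqrt]
    ext i j; fin_cases i <;> fin_cases j <;> simp [mul_comm]
  · rw [hQH, hD2, hsqrt]
    ext i j; fin_cases i <;> fin_cases j <;> simp [mul_comm]
  · rintro hne ⟨U, p', hU, -, hEq⟩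
    have hQD3 : Qᴴ * D3 = diagonal ![(c : ℂ) ^ 2, -(s : ℂ) ^ 2] := by
      rw [hQH, hD3, diagonal_vec2]
      ext i j; fin_cases i <;> fin_cases j <;> simp [sq]
    rw [eq_smul_conjTranspose_inv_mul_iff hQdet, hQD3] at hEq
    have hnorm := norm_eq_of_diagonal_eq_smul_of_mem_unitaryGroup
      (transpose_mem_unitaryGroup_iff.2 hU) hEq
    have hsq : c ^ 2 = s ^ 2 := by
      simpa [abs_of_pos hc, abs_of_pos hs] using (hnorm 0).trans (hnorm 1).symm
    exact hne ((sq_eq_sq₀ hc.le hs.le).1 hsq)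
end
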